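/- arXiv:1807.05606 — 2 statements merged into one kernel-verified Lean document; each statement's English description precedes it below -/
import Mathlib

section
/- Let M be a 4×4 real symmetric positive semidefinite matrix with all diagonal entries equal to 1, and let V ∈ ℝ⁴ with entries c₁, c₂, c₃, c₄ be such that M − V Vᵀ is positive semidefinite. If M₁₂ = M₃₄, then writing σᵢ = √(1 − cᵢ²), all three Tsirelson–Landau–Masanes inequalities hold: |c₁c₂ − c₃c₄| ≤ σ₁σ₂ + σ₃σ₄, |c₁c₃ − c₂c₄| ≤ σ₁σ₃ + σ₂σ₄, and |c₂c₃ − c₁c₄| ≤ σ₂σ₃ + σ₁σ₄. -/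
/-!
Writing `C = M - V Vᵀ`, the hypothesis `M₁₂ = M₃₄` gives `c₁c₂ - c₃c₄ = C₃₄ - C₁₂`, and the
`2 × 2` principal minors of the positive semidefinite `C` bound `|Cᵢⱼ|` by `σᵢσⱼ`; this is the
first inequality. Squaring, `(σ₁σ₂ + σ₃σ₄)² - (c₁c₂ - c₃c₄)²` turns out to be a symmetric
function of `c₁, c₂, c₃, c₄`, so the first inequality implies the other two.
-/

open Matrix Real

theorem Matrix.PosSemidef.sq_apply_le {n : Type*} {A : Matrix n n ℝ}
    (hA : A.PosSemidef) (i j : n) : A i j ^ 2 ≤ A i i * A j j := by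
  have hdet := (hA.submatrix ![i, j]).det_nonneg
  have hsymm : A j i = A i j := by simpa using hA.isHermitian.apply i j
  simp only [det_fin_two, submatrix_apply, cons_val_zero, cons_val_one, hsymm] at hdet
  linarith [sq (A i j)]

theorem Matrix.PosSemidef.abs_apply_le_sqrt_mul_sqrt {n : Type*}
    {A : Matrix n n ℝ} (hA : A.PosSemidef) (i j : n) :
    |A i j| ≤ √(A i i) * √(A j j) := by
  rw [← sqrt_mul hA.diag_nonneg]
  exact abs_le_sqrt (hA.sq_apply_le i j)

section Covariance

variable {n : Type*} {M : Matrix n n ℝ} {V : n → ℝ}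

theorem sq_le_one_of_posSemidef_sub_vecMulVec (hdiag : ∀ i, M i i = 1)
    (hC : (M - vecMulVec V V).PosSemidef) (i : n) : V i ^ 2 ≤ 1 := by
  have := hC.diag_nonneg (i := i)
  simp only [Matrix.sub_apply, vecMulVec_apply, hdiag] at this
  nlinarith

theorem abs_sub_mul_le_of_posSemidef_sub_vecMulVec (hdiag : ∀ i, M i i = 1)
    (hC : (M - vecMulVec V V).PosSemidef) (i j : n) :
    |M i j - V i * V j| ≤ √(1 - V i ^ 2) * √(1 - V j ^ 2) := by
  simpa [Matrix.sub_apply, vecMulVec_apply, hdiag, sq] using hC.abs_apply_le_sqrt_mul_sqrt i j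

theorem abs_mul_sub_mul_le_of_apply_eq (hdiag : ∀ i, M i i = 1)
    (hC : (M - vecMulVec V V).PosSemidef) {i j k l : n} (hM : M i j = M k l) :
    |V i * V j - V k * V l| ≤
      √(1 - V i ^ 2) * √(1 - V j ^ 2) + √(1 - V k ^ 2) * √(1 - V l ^ 2) := by
  have hij := abs_sub_mul_le_of_posSemidef_sub_vecMulVec hdiag hC i j
  have hkl := abs_sub_mul_le_of_posSemidef_sub_vecMulVec hdiag hC k l
  calc |V i * V j - V k * V l| = |(M k l - V k * V l) - (M i j - V i * V j)| := by
        rw [hM, sub_sub_sub_cancel_left]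
    _ ≤ |M k l - V k * V l| + |M i j - V i * V j| := abs_sub _ _
    _ ≤ _ := by linarith

end Covariance

theorem abs_mul_sub_mul_le_iff {a b c d : ℝ} (ha : a ^ 2 ≤ 1) (hb : b ^ 2 ≤ 1)
    (hc : c ^ 2 ≤ 1) (hd : d ^ 2 ≤ 1) :
    |a * b - c * d| ≤ √(1 - a ^ 2) * √(1 - b ^ 2) + √(1 - c ^ 2) * √(1 - d ^ 2) ↔
      0 ≤ 2 - a ^ 2 - b ^ 2 - c ^ 2 - d ^ 2 +
        2 * (√(1 - a ^ 2) * √(1 - b ^ 2) * √(1 - c ^ 2) * √(1 - d ^ 2)) + 2 * (a * b * c * d) := by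
  have hsa := sq_sqrt (sub_nonneg.2 ha)
  have hsb := sq_sqrt (sub_nonneg.2 hb)
  have hsc := sq_sqrt (sub_nonneg.2 hc)
  have hsd := sq_sqrt (sub_nonneg.2 hd)
  rw [← sq_le_sq₀ (abs_nonneg _) (by positivity), sq_abs, ← sub_nonneg]
  have key :
      (√(1 - a ^ 2) * √(1 - b ^ 2) + √(1 - c ^ 2) * √(1 - d ^ 2)) ^ 2 - (a * b - c * d) ^ 2 =
      2 - a ^ 2 - b ^ 2 - c ^ 2 - d ^ 2 +
        2 * (√(1 - a ^ 2) * √(1 - b ^ 2) * √(1 - c ^ 2) * √(1 - d ^ 2)) + 2 * (a * b * c * d) := by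
    linear_combination √(1 - b ^ 2) ^ 2 * hsa + (1 - a ^ 2) * hsb +
      √(1 - d ^ 2) ^ 2 * hsc + (1 - c ^ 2) * hsd
  rw [key]

theorem tlm_of_covariance_general
    (M : Matrix (Fin 4) (Fin 4) ℝ)
    (hdiag : ∀ i, M i i = 1)
    (V : Fin 4 → ℝ)
    (hC : (M - Matrix.vecMulVec V V).PosSemidef)
    (hMeq : M 0 1 = M 2 3) :
    |V 0 * V 1 - V 2 * V 3| ≤
      Real.sqrt (1 - (V 0) ^ 2) * Real.sqrt (1 - (V 1) ^ 2) +
      Real.sqrt (1 - (V 2) ^ 2) * Real.sqrt (1 - (V 3) ^ 2) ∧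
    |V 0 * V 2 - V 1 * V 3| ≤
      Real.sqrt (1 - (V 0) ^ 2) * Real.sqrt (1 - (V 2) ^ 2) +
      Real.sqrt (1 - (V 1) ^ 2) * Real.sqrt (1 - (V 3) ^ 2) ∧
    |V 1 * V 2 - V 0 * V 3| ≤
      Real.sqrt (1 - (V 1) ^ 2) * Real.sqrt (1 - (V 2) ^ 2) +
      Real.sqrt (1 - (V 0) ^ 2) * Real.sqrt (1 - (V 3) ^ 2) := by
  have hsq := sq_le_one_of_posSemidef_sub_vecMulVec hdiag hC
  have h0123 := abs_mul_sub_mul_le_of_apply_eq hdiag hC hMeq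
  have hgap := (abs_mul_sub_mul_le_iff (hsq 0) (hsq 1) (hsq 2) (hsq 3)).1 h0123
  refine ⟨h0123,
    (abs_mul_sub_mul_le_iff (hsq 0) (hsq 2) (hsq 1) (hsq 3)).2 (by linarith),
    (abs_mul_sub_mul_le_iff (hsq 1) (hsq 2) (hsq 0) (hsq 3)).2 (by linarith)⟩

/-- For a 4×4 real symmetric PSD matrix `M` with unit diagonal and a
correlator vector `V` with `M - V Vᵀ` PSD, if `M₁₂ = M₃₄` then all three
Tsirelson–Landau–Masanes inequalities hold. -/
theorem tlm_of_covariance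
    (M : Matrix (Fin 4) (Fin 4) ℝ) (hM : M.PosSemidef)
    (hdiag : ∀ i, M i i = 1)
    (V : Fin 4 → ℝ)
    (hC : (M - Matrix.vecMulVec V V).PosSemidef)
    (hMeq : M 0 1 = M 2 3) :
    |V 0 * V 1 - V 2 * V 3| ≤
      Real.sqrt (1 - (V 0) ^ 2) * Real.sqrt (1 - (V 1) ^ 2) +
      Real.sqrt (1 - (V 2) ^ 2) * Real.sqrt (1 - (V 3) ^ 2) ∧
    |V 0 * V 2 - V 1 * V 3| ≤
      Real.sqrt (1 - (V 0) ^ 2) * Real.sqrt (1 - (V 2) ^ 2) +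
      Real.sqrt (1 - (V 1) ^ 2) * Real.sqrt (1 - (V 3) ^ 2) ∧
    |V 1 * V 2 - V 0 * V 3| ≤
      Real.sqrt (1 - (V 1) ^ 2) * Real.sqrt (1 - (V 2) ^ 2) +
      Real.sqrt (1 - (V 0) ^ 2) * Real.sqrt (1 - (V 3) ^ 2) :=
  tlm_of_covariance_general M hdiag V hC hMeq
end

section
/- Let H be a complex Hilbert space, ψ ∈ H a unit vector, and A₀, A₁, B₀, B₁ : H →L[ℂ] H bounded self-adjoint operators satisfying Aᵢ ∘ Aᵢ = 1 and Bⱼ ∘ Bⱼ = 1, with Aᵢ ∘ Bⱼ = Bⱼ ∘ Aᵢ for all i, j ∈ {0,1}. Let d = re⟪ψ, (A₀A₁ + A₁A₀)ψ⟫ / 2. Then |re⟪ψ, (A₀B₀ + A₁B₀ + A₀B₁ − A₁B₁)ψ⟫| ≤ √(2(1 + d)) + √(2(1 − d)). -/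
/-!
With `C = A₀ + A₁` and `D = A₀ - A₁` the Bell-CHSH operator is `C B₀ + D B₁`, so by
self-adjointness of `C`, `D` and Cauchy-Schwarz its expectation is at most
`‖Cψ‖ ‖B₀ψ‖ + ‖Dψ‖ ‖B₁ψ‖`. Self-adjoint involutions are unitary, so `‖Bⱼψ‖ = 1`, while
`C² = 2 + {A₀, A₁}` and `D² = 2 - {A₀, A₁}` give `‖Cψ‖² = 2(1 + d)` and `‖Dψ‖² = 2(1 - d)`.
-/

open ContinuousLinearMap RCLike

lemma IsSelfAdjoint.mem_unitary_of_mul_self_eq_one {R : Type*} [Monoid R] [StarMul R] {u : R}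
    (hu : IsSelfAdjoint u) (h : u * u = 1) : u ∈ unitary R :=
  Unitary.mem_iff.mpr ⟨by rw [hu.star_eq, h], by rw [hu.star_eq, h]⟩

section

variable {𝕜 E : Type*} [RCLike 𝕜] [NormedAddCommGroup E] [InnerProductSpace 𝕜 E]

lemma abs_re_inner_le_norm (x y : E) : |re (inner 𝕜 x y)| ≤ ‖x‖ * ‖y‖ :=
  (abs_re_le_norm _).trans (norm_inner_le_norm x y)

variable [CompleteSpace E]

lemma IsSelfAdjoint.norm_sq_apply_eq_re_inner {T : E →L[𝕜] E} (hT : IsSelfAdjoint T) (x : E) :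
    ‖T x‖ ^ 2 = re (inner 𝕜 x ((T * T) x)) := by
  rw [apply_norm_sq_eq_inner_adjoint_right, hT.adjoint_eq, mul_def]

lemma norm_sq_add_apply_of_involutions {A₀ A₁ : E →L[𝕜] E}
    (hA₀ : IsSelfAdjoint A₀) (hA₁ : IsSelfAdjoint A₁) (hA₀2 : A₀ * A₀ = 1) (hA₁2 : A₁ * A₁ = 1)
    (x : E) :
    ‖(A₀ + A₁) x‖ ^ 2 = 2 * ‖x‖ ^ 2 + re (inner 𝕜 x ((A₀ * A₁ + A₁ * A₀) x)) := by
  have hsq : (A₀ + A₁) * (A₀ + A₁) = 1 + 1 + (A₀ * A₁ + A₁ * A₀) := by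
    rw [add_mul, mul_add, mul_add, hA₀2, hA₁2]; abel
  rw [(hA₀.add hA₁).norm_sq_apply_eq_re_inner, hsq, add_apply, add_apply, one_apply_eq_self,
    inner_add_right, inner_add_right, map_add, map_add, inner_self_eq_norm_sq]
  ring

lemma norm_sq_sub_apply_of_involutions {A₀ A₁ : E →L[𝕜] E}
    (hA₀ : IsSelfAdjoint A₀) (hA₁ : IsSelfAdjoint A₁) (hA₀2 : A₀ * A₀ = 1) (hA₁2 : A₁ * A₁ = 1)
    (x : E) :
    ‖(A₀ - A₁) x‖ ^ 2 = 2 * ‖x‖ ^ 2 - re (inner 𝕜 x ((A₀ * A₁ + A₁ * A₀) x)) := by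
  have hsq : (A₀ - A₁) * (A₀ - A₁) = 1 + 1 - (A₀ * A₁ + A₁ * A₀) := by
    rw [sub_mul, mul_sub, mul_sub, hA₀2, hA₁2]; abel
  rw [(hA₀.sub hA₁).norm_sq_apply_eq_re_inner, hsq, sub_apply, add_apply, one_apply_eq_self,
    inner_sub_right, inner_add_right, map_sub, map_add, inner_self_eq_norm_sq]
  ring

lemma abs_re_inner_add_mul_apply_le {C D : E →L[𝕜] E} (hC : IsSelfAdjoint C)
    (hD : IsSelfAdjoint D) (B₀ B₁ : E →L[𝕜] E) (x : E) :
    |re (inner 𝕜 x ((C * B₀ + D * B₁) x))| ≤ ‖C x‖ * ‖B₀ x‖ + ‖D x‖ * ‖B₁ x‖ := by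
  have hsplit : inner 𝕜 x ((C * B₀ + D * B₁) x) = inner 𝕜 (C x) (B₀ x) + inner 𝕜 (D x) (B₁ x) := by
    rw [add_apply, mul_apply_eq_comp, mul_apply_eq_comp, inner_add_right]
    exact congrArg₂ (· + ·) (hC.isSymmetric x _).symm (hD.isSymmetric x _).symm
  calc |re (inner 𝕜 x ((C * B₀ + D * B₁) x))|
      ≤ |re (inner 𝕜 (C x) (B₀ x))| + |re (inner 𝕜 (D x) (B₁ x))| := by
        rw [hsplit, map_add]; exact abs_add_le _ _
    _ ≤ ‖C x‖ * ‖B₀ x‖ + ‖D x‖ * ‖B₁ x‖ :=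
        add_le_add (abs_re_inner_le_norm _ _) (abs_re_inner_le_norm _ _)

end

theorem chsh_anticommutator_bound_general
    {H : Type*} [NormedAddCommGroup H] [InnerProductSpace ℂ H] [CompleteSpace H]
    (ψ : H) (hψ : ‖ψ‖ = 1)
    (A₀ A₁ B₀ B₁ : H →L[ℂ] H)
    (hA₀ : IsSelfAdjoint A₀) (hA₁ : IsSelfAdjoint A₁)
    (hB₀ : IsSelfAdjoint B₀) (hB₁ : IsSelfAdjoint B₁)
    (hA₀2 : A₀ * A₀ = 1) (hA₁2 : A₁ * A₁ = 1)
    (hB₀2 : B₀ * B₀ = 1) (hB₁2 : B₁ * B₁ = 1)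
    (d : ℝ) (hd : d = (inner ℂ ψ ((A₀ * A₁ + A₁ * A₀) ψ) : ℂ).re / 2) :
    |(inner ℂ ψ ((A₀ * B₀ + A₁ * B₀ + A₀ * B₁ - A₁ * B₁) ψ) : ℂ).re| ≤
      Real.sqrt (2 * (1 + d)) + Real.sqrt (2 * (1 - d)) := by
  have hsplit : A₀ * B₀ + A₁ * B₀ + A₀ * B₁ - A₁ * B₁ = (A₀ + A₁) * B₀ + (A₀ - A₁) * B₁ := by
    noncomm_ring
  have hB₀ψ : ‖B₀ ψ‖ = 1 :=
    (norm_map_of_mem_unitary (hB₀.mem_unitary_of_mul_self_eq_one hB₀2) ψ).trans hψ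
  have hB₁ψ : ‖B₁ ψ‖ = 1 :=
    (norm_map_of_mem_unitary (hB₁.mem_unitary_of_mul_self_eq_one hB₁2) ψ).trans hψ
  have hCψ : ‖(A₀ + A₁) ψ‖ = √(2 * (1 + d)) := by
    rw [← Real.sqrt_sq (norm_nonneg _), norm_sq_add_apply_of_involutions hA₀ hA₁ hA₀2 hA₁2,
      re_to_complex, hψ, hd]
    congr 1; ring
  have hDψ : ‖(A₀ - A₁) ψ‖ = √(2 * (1 - d)) := by
    rw [← Real.sqrt_sq (norm_nonneg _), norm_sq_sub_apply_of_involutions hA₀ hA₁ hA₀2 hA₁2,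
      re_to_complex, hψ, hd]
    congr 1; ring
  calc _ ≤ ‖(A₀ + A₁) ψ‖ * ‖B₀ ψ‖ + ‖(A₀ - A₁) ψ‖ * ‖B₁ ψ‖ :=
        hsplit ▸ abs_re_inner_add_mul_apply_le (hA₀.add hA₁) (hA₀.sub hA₁) B₀ B₁ ψ
    _ = √(2 * (1 + d)) + √(2 * (1 - d)) := by rw [hB₀ψ, hB₁ψ, hCψ, hDψ, mul_one, mul_one]

/-- In the quantum Bell-CHSH scenario, with
`d = ⟨{A₀, A₁}⟩/2`, the Bell-CHSH parameter is bounded by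
`√(2(1 + d)) + √(2(1 - d))`. -/
theorem chsh_anticommutator_bound
    {H : Type*} [NormedAddCommGroup H] [InnerProductSpace ℂ H] [CompleteSpace H]
    (ψ : H) (hψ : ‖ψ‖ = 1)
    (A₀ A₁ B₀ B₁ : H →L[ℂ] H)
    (hA₀ : IsSelfAdjoint A₀) (hA₁ : IsSelfAdjoint A₁)
    (hB₀ : IsSelfAdjoint B₀) (hB₁ : IsSelfAdjoint B₁)
    (hA₀2 : A₀ * A₀ = 1) (hA₁2 : A₁ * A₁ = 1)
    (hB₀2 : B₀ * B₀ = 1) (hB₁2 : B₁ * B₁ = 1)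
    (hcomm : ∀ i ∈ [A₀, A₁], ∀ j ∈ [B₀, B₁], i * j = j * i)
    (d : ℝ) (hd : d = (inner ℂ ψ ((A₀ * A₁ + A₁ * A₀) ψ) : ℂ).re / 2) :
    |(inner ℂ ψ ((A₀ * B₀ + A₁ * B₀ + A₀ * B₁ - A₁ * B₁) ψ) : ℂ).re| ≤
      Real.sqrt (2 * (1 + d)) + Real.sqrt (2 * (1 - d)) :=
  chsh_anticommutator_bound_general ψ hψ A₀ A₁ B₀ B₁ hA₀ hA₁ hB₀ hB₁ hA₀2 hA₁2 hB₀2 hB₁2 d hd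
end
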